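/- arXiv:1604.01727 — 6 statements merged into one kernel-verified Lean document; each statement's English description precedes it below -/
import Mathlib

section
/- Let v : [0,∞) → X be continuously differentiable with v(0) = v₀ and v′(τ) = −g(v(τ))·(v(τ) − p) for all τ ≥ 0. Then for every τ ≥ 0 one has the separation-of-variables formula v(τ) = θ(τ)·v₀ + (1 − θ(τ))·p, where θ(τ) = exp(−∫₀^τ g(v(σ)) dσ). -/
/-!
Separation of variables: `u := v - p` solves the scalar linear equation `u' = -a(τ) u` with the
continuous coefficient `a(τ) = g(v(τ))`, so the integrating factor `exp (∫₀^τ a) • u` has zero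
right derivative on `[0, ∞)` and is therefore constant.
-/

open Set Real intervalIntegral

section

variable {E : Type*} [NormedAddCommGroup E] [NormedSpace ℝ E]

theorem hasDerivWithinAt_integral_Ici [CompleteSpace E] {f : ℝ → E} {c x : ℝ}
    (hf : ContinuousOn f (Ici c)) (hx : x ∈ Ici c) :
    HasDerivWithinAt (fun t => ∫ s in c..t, f s) (f x) (Ici x) x := by
  have hIci : Ioi x ⊆ Ici c := (Ioi_subset_Ici_self).trans (Ici_subset_Ici.2 hx)
  refine integral_hasDerivWithinAt_right ?_
    ⟨Ioi x, self_mem_nhdsWithin, (hf.mono hIci).aestronglyMeasurable measurableSet_Ioi⟩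
    ((hf x hx).mono hIci)
  exact (hf.mono (uIcc_of_le (mem_Ici.1 hx) ▸ Icc_subset_Ici_self)).intervalIntegrable

theorem continuousOn_integral_Icc {f : ℝ → E} {c τ : ℝ}
    (hf : ContinuousOn f (Ici c)) (hτ : c ≤ τ) :
    ContinuousOn (fun t => ∫ s in c..t, f s) (Icc c τ) := by
  rw [← uIcc_of_le hτ]
  exact continuousOn_primitive_interval
    ((hf.mono (uIcc_of_le hτ ▸ Icc_subset_Ici_self)).integrableOn_compact isCompact_uIcc)

theorem exp_integral_smul_eq_of_hasDerivWithinAt {a : ℝ → ℝ} {u : ℝ → E}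
    (ha : ContinuousOn a (Ici 0))
    (hu : ∀ t ∈ Ici (0 : ℝ), HasDerivWithinAt u (-(a t) • u t) (Ici 0) t)
    {τ : ℝ} (hτ : τ ∈ Ici (0 : ℝ)) :
    exp (∫ s in (0 : ℝ)..τ, a s) • u τ = u 0 := by
  set w : ℝ → E := fun t => exp (∫ s in (0 : ℝ)..t, a s) • u t
  have hw_deriv : ∀ t ∈ Ici (0 : ℝ), HasDerivWithinAt w 0 (Ici t) t := by
    intro t ht
    convert (hasDerivWithinAt_integral_Ici ha ht).exp.smul
      ((hu t ht).mono (Ici_subset_Ici.2 ht)) using 1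
    · rfl
    rw [smul_smul]
    module
  have hw_cont : ContinuousOn w (Icc 0 τ) :=
    (continuousOn_exp.comp (continuousOn_integral_Icc ha hτ) (mapsTo_univ _ _)).smul
      fun t ht => (hu t ht.1).continuousWithinAt.mono Icc_subset_Ici_self
  have := constant_of_has_deriv_right_zero hw_cont (fun t ht => hw_deriv t ht.1) τ ⟨hτ, le_rfl⟩
  simpa only [w, integral_same, exp_zero, one_smul] using this

theorem eq_exp_neg_integral_smul_of_hasDerivWithinAt {a : ℝ → ℝ} {u : ℝ → E}
    (ha : ContinuousOn a (Ici 0))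
    (hu : ∀ t ∈ Ici (0 : ℝ), HasDerivWithinAt u (-(a t) • u t) (Ici 0) t)
    {τ : ℝ} (hτ : τ ∈ Ici (0 : ℝ)) :
    u τ = exp (-∫ s in (0 : ℝ)..τ, a s) • u 0 := by
  rw [← exp_integral_smul_eq_of_hasDerivWithinAt ha hu hτ, smul_smul, ← exp_add,
    neg_add_cancel, exp_zero, one_smul]

end

theorem separation_of_variables_general
    {X : Type*} [NormedAddCommGroup X] [NormedSpace ℝ X]
    (g : X → ℝ) (hg_cont : Continuous g)
    (p v₀ : X) (v : ℝ → X) (hv0 : v 0 = v₀)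
    (hv' : ∀ τ ∈ Set.Ici (0:ℝ),
      HasDerivWithinAt v ((-(g (v τ))) • (v τ - p)) (Set.Ici 0) τ) :
    ∀ τ ∈ Set.Ici (0:ℝ),
      v τ = Real.exp (-(∫ σ in (0:ℝ)..τ, g (v σ))) • v₀
            + (1 - Real.exp (-(∫ σ in (0:ℝ)..τ, g (v σ)))) • p := by
  intro τ hτ
  have hv_cont : ContinuousOn v (Ici 0) := fun t ht => (hv' t ht).continuousWithinAt
  have hsep := eq_exp_neg_integral_smul_of_hasDerivWithinAt (a := fun t => g (v t))
    (u := fun t => v t - p)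
    (hg_cont.comp_continuousOn hv_cont) (fun t ht => (hv' t ht).sub_const p) hτ
  rw [sub_eq_iff_eq_add] at hsep
  rw [hsep, hv0]
  module

/-- The solution of the abstract determining form `dv/dτ = -g(v)(v - p)` in a Banach
space `X` satisfies the separation-of-variables formula
`v(τ) = θ(τ)·v₀ + (1 - θ(τ))·p`, where `θ(τ) = exp(-∫₀^τ g(v(σ)) dσ)`. -/
theorem separation_of_variables
    {X : Type*} [NormedAddCommGroup X] [NormedSpace ℝ X] [CompleteSpace X]
    (g : X → ℝ) (hg_cont : Continuous g) (hg_nonneg : ∀ x, 0 ≤ g x)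
    (p v₀ : X) (v : ℝ → X) (hv0 : v 0 = v₀)
    (hv' : ∀ τ ∈ Set.Ici (0:ℝ),
      HasDerivWithinAt v ((-(g (v τ))) • (v τ - p)) (Set.Ici 0) τ) :
    ∀ τ ∈ Set.Ici (0:ℝ),
      v τ = Real.exp (-(∫ σ in (0:ℝ)..τ, g (v σ))) • v₀
            + (1 - Real.exp (-(∫ σ in (0:ℝ)..τ, g (v σ)))) • p :=
  separation_of_variables_general g hg_cont p v₀ v hv0 hv'
end

section
/- Let h : X → [0,∞) be Lipschitz with constant c and h(p) = 0, and let v : [0,∞) → X be continuously differentiable with v(0) = v₀ and v′(τ) = −h(v(τ))²·(v(τ) − p) for all τ ≥ 0. Then for all τ ≥ 0, ‖v(τ) − p‖ ≥ ‖v₀ − p‖ / (1 + 2c²·‖v₀ − p‖²·τ)^{1/2}; in particular v(τ) converges to p no faster than O(τ^{−1/2}). -/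
/-!
Along the solution, `v τ - p = exp (-A τ) • (v₀ - p)` with `A τ = ∫₀^τ h (v s) ^ 2 ds`: the trajectory
runs straight towards `p` and only its speed is unknown. Since `h p = 0`, the Lipschitz bound gives
`A' = h (v τ) ^ 2 ≤ c² ‖v τ - p‖² = c² ‖v₀ - p‖² exp (-2 A)`, i.e. `(exp (2 A))' ≤ 2 c² ‖v₀ - p‖²`,
so `exp (2 A τ) ≤ 1 + 2 c² ‖v₀ - p‖² τ`.
-/

open Set Real

theorem exp_two_mul_le_add_mul {A a : ℝ → ℝ} {K : ℝ} (hA : ∀ t, HasDerivAt A (a t) t)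
    (hK : ∀ t, 0 < t → a t * exp (2 * A t) ≤ K) {t : ℝ} (ht : 0 ≤ t) :
    exp (2 * A t) ≤ exp (2 * A 0) + 2 * K * t := by
  have hB : ∀ s, HasDerivAt (fun s ↦ exp (2 * A s)) (exp (2 * A s) * (2 * a s)) s :=
    fun s ↦ ((hA s).const_mul 2).exp
  have := (convex_Ici 0).image_sub_le_mul_sub_of_deriv_le (C := 2 * K)
    (fun s _ ↦ (hB s).continuousAt.continuousWithinAt)
    (fun s _ ↦ (hB s).differentiableAt.differentiableWithinAt)
    (fun s hs ↦ by
      rw [interior_Ici] at hs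
      rw [(hB s).deriv]
      linarith [hK s hs])
    0 self_mem_Ici t ht ht
  linarith

section

variable {E : Type*} [NormedAddCommGroup E] [NormedSpace ℝ E]

theorem exp_integral_smul_sub_eq
    {a : ℝ → ℝ} (ha : Continuous a) {v : ℝ → E} {p : E}
    (hv : ∀ t ∈ Ici (0 : ℝ), HasDerivWithinAt v (-a t • (v t - p)) (Ici 0) t)
    {t : ℝ} (ht : 0 ≤ t) :
    exp (∫ s in 0..t, a s) • (v t - p) = v 0 - p := by
  set z : ℝ → E := fun s ↦ exp (∫ r in 0..s, a r) • (v s - p)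
  have hz : ∀ s ∈ Ici (0 : ℝ), HasDerivWithinAt z 0 (Ici 0) s := fun s hs ↦ by
    have hexp := (ha.integral_hasStrictDerivAt 0 s).hasDerivAt.exp.hasDerivWithinAt (s := Ici 0)
    refine (hexp.smul ((hv s hs).sub_const p)).congr_deriv ?_
    module
  have hconst := constant_of_has_deriv_right_zero
    (fun s hs ↦ (hz s hs.1).continuousWithinAt.mono Icc_subset_Ici_self)
    (fun s hs ↦ (hz s hs.1).mono (Ici_subset_Ici.mpr hs.1)) t ⟨ht, le_rfl⟩
  simpa [z] using hconst

theorem div_sqrt_le_norm_sub_of_coeff_le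
    {a : ℝ → ℝ} (ha : Continuous a) {v : ℝ → E} {p : E} {K : ℝ}
    (hv : ∀ t ∈ Ici (0 : ℝ), HasDerivWithinAt v (-a t • (v t - p)) (Ici 0) t)
    (haK : ∀ t, 0 ≤ t → a t ≤ K * ‖v t - p‖ ^ 2) {t : ℝ} (ht : 0 ≤ t) :
    ‖v 0 - p‖ / √(1 + 2 * K * ‖v 0 - p‖ ^ 2 * t) ≤ ‖v t - p‖ := by
  set A : ℝ → ℝ := fun s ↦ ∫ r in 0..s, a r
  have hnorm : ∀ s, 0 ≤ s → exp (A s) * ‖v s - p‖ = ‖v 0 - p‖ := fun s hs ↦ by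
    simpa [norm_smul, abs_of_pos (exp_pos _)] using
      congrArg norm (exp_integral_smul_sub_eq ha hv hs)
  have hK : ∀ s, 0 < s → a s * exp (2 * A s) ≤ K * ‖v 0 - p‖ ^ 2 := fun s hs ↦
    calc a s * exp (2 * A s) ≤ K * ‖v s - p‖ ^ 2 * exp (2 * A s) := by
          gcongr; exact haK s hs.le
      _ = K * (exp (A s) * ‖v s - p‖) ^ 2 := by rw [two_mul, exp_add]; ring
      _ = K * ‖v 0 - p‖ ^ 2 := by rw [hnorm s hs.le]
  have hgrowth := exp_two_mul_le_add_mul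
    (fun s ↦ (ha.integral_hasStrictDerivAt 0 s).hasDerivAt) hK ht
  have hexp : exp (A t) ≤ √(1 + 2 * K * ‖v 0 - p‖ ^ 2 * t) := by
    simp only [intervalIntegral.integral_same, mul_zero, exp_zero] at hgrowth
    rw [← sqrt_sq (exp_pos _).le, ← exp_nat_mul]
    exact sqrt_le_sqrt (by push_cast; linarith)
  calc ‖v 0 - p‖ / √(1 + 2 * K * ‖v 0 - p‖ ^ 2 * t) ≤ ‖v 0 - p‖ / exp (A t) :=
        div_le_div_of_nonneg_left (norm_nonneg _) (exp_pos _) hexp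
    _ = ‖v t - p‖ := by rw [← hnorm t ht]; field_simp

end

theorem convergence_to_p_rate_lower_bound_general
    {X : Type*} [NormedAddCommGroup X] [NormedSpace ℝ X]
    (p v₀ : X) (c : ℝ) (h : X → ℝ)
    (hlip : ∀ x y : X, |h x - h y| ≤ c * ‖x - y‖)
    (hp : h p = 0)
    (v : ℝ → X) (hv0 : v 0 = v₀)
    (hv' : ∀ τ ∈ Set.Ici (0:ℝ),
      HasDerivWithinAt v ((-(h (v τ) ^ 2)) • (v τ - p)) (Set.Ici 0) τ) :
    ∀ τ ∈ Set.Ici (0:ℝ),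
      ‖v₀ - p‖ / Real.sqrt (1 + 2 * c ^ 2 * ‖v₀ - p‖ ^ 2 * τ) ≤ ‖v τ - p‖ := by
  intro τ hτ
  have hh : Continuous h := LipschitzWith.continuous (K := c.toNNReal) <|
    .of_dist_le_mul fun x y ↦ by
      rw [Real.dist_eq, dist_eq_norm]
      exact (hlip x y).trans <| mul_le_mul_of_nonneg_right (Real.le_coe_toNNReal c) (norm_nonneg _)
  -- extended by `max t 0` to be continuous on all of `ℝ`, as the FTC for `∫₀^t a` requires
  set a : ℝ → ℝ := fun t ↦ h (v (max t 0)) ^ 2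
  have ha_eq : ∀ t, 0 ≤ t → a t = h (v t) ^ 2 := fun t ht ↦ by simp [a, ht]
  have ha : Continuous a := (hh.comp <| ContinuousOn.comp_continuous
    (fun t ht ↦ (hv' t ht).continuousWithinAt) (continuous_id.max continuous_const)
    fun t ↦ le_max_right t 0).pow 2
  have ha_le : ∀ t, 0 ≤ t → a t ≤ c ^ 2 * ‖v t - p‖ ^ 2 := fun t ht ↦ by
    rw [ha_eq t ht, ← sq_abs, ← mul_pow]
    have hlip_p := hlip (v t) p
    rw [hp, sub_zero] at hlip_p
    exact pow_le_pow_left₀ (abs_nonneg _) hlip_p 2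
  subst hv0
  exact div_sqrt_le_norm_sub_of_coeff_le ha (fun t ht ↦ ha_eq t ht ▸ hv' t ht) ha_le hτ

/-- If `h : X → [0,∞)` is Lipschitz with constant `c`, `h(p) = 0`, and `v` solves
`dv/dτ = -h(v)²·(v - p)` with `v(0) = v₀`, then
`‖v(τ) - p‖ ≥ ‖v₀ - p‖ / (1 + 2c²‖v₀ - p‖²τ)^{1/2}` for all `τ ≥ 0`:
convergence to `p` is no faster than `O(τ^{-1/2})`. -/
theorem convergence_to_p_rate_lower_bound
    {X : Type*} [NormedAddCommGroup X] [NormedSpace ℝ X] [CompleteSpace X]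
    (p v₀ : X) (c : ℝ) (hc : 0 ≤ c) (h : X → ℝ)
    (hpos : ∀ x, 0 ≤ h x)
    (hlip : ∀ x y : X, |h x - h y| ≤ c * ‖x - y‖)
    (hp : h p = 0)
    (v : ℝ → X) (hv0 : v 0 = v₀)
    (hv' : ∀ τ ∈ Set.Ici (0:ℝ),
      HasDerivWithinAt v ((-(h (v τ) ^ 2)) • (v τ - p)) (Set.Ici 0) τ) :
    ∀ τ ∈ Set.Ici (0:ℝ),
      ‖v₀ - p‖ / Real.sqrt (1 + 2 * c ^ 2 * ‖v₀ - p‖ ^ 2 * τ) ≤ ‖v τ - p‖ :=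
  convergence_to_p_rate_lower_bound_general p v₀ c h hlip hp v hv0 hv'
end

section
/- Let K ≥ 0, θ̄ ∈ [0,1], and let θ : [0,∞) → ℝ be differentiable with θ(0) = 1, θ̄ ≤ θ(τ) ≤ 1 for all τ ≥ 0, and θ′(τ) ≥ −K·(θ(τ) − θ̄)² for all τ ≥ 0. Then θ(τ) − θ̄ ≥ (1 − θ̄)/(1 + Kτ) for all τ ≥ 0. -/
/-!
Write `u = θ - θ̄`, so `0 ≤ u ≤ u 0 = 1 - θ̄` and `u' ≥ -K u²`. Since `u ≤ u 0`, the quadratic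
bound implies the linear one `u' ≥ -K (u 0) u`, so `u · exp (K (u 0) τ)` is nondecreasing and `u`
stays positive. Then `1 / u - K τ` is nonincreasing, which gives `u τ ≥ u 0 / (1 + K (u 0) τ)`,
and `u 0 ≤ 1` finishes.
-/

open Set Real

section Comparison

variable {u u' : ℝ → ℝ} {a : ℝ}

theorem monotoneOn_Ici_of_hasDerivWithinAt_nonneg
    (hu : ∀ t ∈ Ici a, HasDerivWithinAt u (u' t) (Ici a) t) (hu' : ∀ t ∈ Ioi a, 0 ≤ u' t) :
    MonotoneOn u (Ici a) :=
  monotoneOn_of_hasDerivWithinAt_nonneg (convex_Ici a)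
    (fun t ht => (hu t ht).continuousWithinAt)
    (fun t ht => by
      rw [interior_Ici] at ht ⊢
      exact (hu t (mem_Ici_of_Ioi ht)).mono Ioi_subset_Ici_self)
    (fun t ht => hu' t (interior_Ici (a := a) ▸ ht))

theorem le_mul_exp_of_hasDerivWithinAt_ge_neg_mul {L : ℝ}
    (hu : ∀ t ∈ Ici a, HasDerivWithinAt u (u' t) (Ici a) t)
    (hineq : ∀ t ∈ Ici a, -L * u t ≤ u' t) :
    ∀ t ∈ Ici a, u a ≤ u t * exp (L * (t - a)) := by
  have hmono : MonotoneOn (fun t => u t * exp (L * (t - a))) (Ici a) := by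
    refine monotoneOn_Ici_of_hasDerivWithinAt_nonneg
      (u' := fun t => (u' t + L * u t) * exp (L * (t - a))) (fun t ht => ?_) (fun t ht => ?_)
    · have hexp : HasDerivWithinAt (fun s => exp (L * (s - a))) (exp (L * (t - a)) * L)
          (Ici a) t := by
        simpa using (((hasDerivWithinAt_id t (Ici a)).sub_const a).const_mul L).exp
      exact ((hu t ht).fun_mul hexp).congr_deriv (by ring)
    · have := hineq t (mem_Ici_of_Ioi ht)
      exact mul_nonneg (by linarith) (exp_pos _).le
  intro t ht
  simpa using hmono self_mem_Ici ht ht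

theorem inv_le_inv_add_mul_of_hasDerivWithinAt_ge_neg_sq {K : ℝ}
    (hu : ∀ t ∈ Ici a, HasDerivWithinAt u (u' t) (Ici a) t) (hpos : ∀ t ∈ Ici a, 0 < u t)
    (hineq : ∀ t ∈ Ici a, -K * u t ^ 2 ≤ u' t) :
    ∀ t ∈ Ici a, (u t)⁻¹ ≤ (u a)⁻¹ + K * (t - a) := by
  have hmono : MonotoneOn (fun t => K * (t - a) - (u t)⁻¹) (Ici a) := by
    refine monotoneOn_Ici_of_hasDerivWithinAt_nonneg
      (u' := fun t => K + u' t / u t ^ 2) (fun t ht => ?_) (fun t ht => ?_)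
    · have hinv : HasDerivWithinAt (fun s => (u s)⁻¹) (-u' t / u t ^ 2) (Ici a) t :=
        (hu t ht).inv (hpos t ht).ne'
      have hlin : HasDerivWithinAt (fun s => K * (s - a)) K (Ici a) t := by
        simpa using ((hasDerivWithinAt_id t (Ici a)).sub_const a).const_mul K
      exact (hlin.fun_sub hinv).congr_deriv (by ring)
    · have hsq : 0 < u t ^ 2 := pow_pos (hpos t (mem_Ici_of_Ioi ht)) 2
      have : -K ≤ u' t / u t ^ 2 := by
        rw [le_div_iff₀ hsq]
        exact hineq t (mem_Ici_of_Ioi ht)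
      linarith
  intro t ht
  have := hmono self_mem_Ici ht ht
  simp only [sub_self, mul_zero, zero_sub] at this
  linarith

theorem div_one_add_mul_le_of_hasDerivWithinAt_ge_neg_sq {K : ℝ} (hK : 0 ≤ K)
    (hu : ∀ t ∈ Ici a, HasDerivWithinAt u (u' t) (Ici a) t)
    (hu_nonneg : ∀ t ∈ Ici a, 0 ≤ u t) (hu_le : ∀ t ∈ Ici a, u t ≤ u a)
    (hineq : ∀ t ∈ Ici a, -K * u t ^ 2 ≤ u' t) :
    ∀ t ∈ Ici a, u a / (1 + K * u a * (t - a)) ≤ u t := by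
  intro t ht
  rcases (hu_nonneg a self_mem_Ici).eq_or_lt with hua | hua
  · rw [← hua, zero_div]
    exact hu_nonneg t ht
  have hlin : ∀ s ∈ Ici a, -(K * u a) * u s ≤ u' s := fun s hs => by
    have := mul_nonneg (mul_nonneg hK (hu_nonneg s hs)) (sub_nonneg.2 (hu_le s hs))
    linarith [hineq s hs]
  have hpos : ∀ s ∈ Ici a, 0 < u s := fun s hs =>
    pos_of_mul_pos_left (hua.trans_le (le_mul_exp_of_hasDerivWithinAt_ge_neg_mul hu hlin s hs))
      (exp_pos _).le
  have hinv := inv_le_inv_add_mul_of_hasDerivWithinAt_ge_neg_sq hu hpos hineq t ht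
  have hden : u a / (1 + K * u a * (t - a)) = ((u a)⁻¹ + K * (t - a))⁻¹ := by
    field_simp
  rw [hden]
  exact inv_le_of_inv_le₀ (hpos t ht) hinv

end Comparison

/-- Scalar comparison lemma: if `θ : [0,∞) → [θ̄,1]` is differentiable with `θ(0) = 1`
and `θ'(τ) ≥ -K·(θ(τ) - θ̄)²` for `K ≥ 0`, then `θ(τ) - θ̄ ≥ (1 - θ̄)/(1 + Kτ)`
for all `τ ≥ 0`. -/
theorem quadratic_differential_inequality
    (K : ℝ) (hK : 0 ≤ K) (θbar : ℝ) (hθbar : θbar ∈ Set.Icc (0:ℝ) 1)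
    (θ θ' : ℝ → ℝ)
    (hθ0 : θ 0 = 1)
    (hmem : ∀ τ ∈ Set.Ici (0:ℝ), θbar ≤ θ τ ∧ θ τ ≤ 1)
    (hderiv : ∀ τ ∈ Set.Ici (0:ℝ), HasDerivWithinAt θ (θ' τ) (Set.Ici 0) τ)
    (hineq : ∀ τ ∈ Set.Ici (0:ℝ), -K * (θ τ - θbar) ^ 2 ≤ θ' τ) :
    ∀ τ ∈ Set.Ici (0:ℝ), (1 - θbar) / (1 + K * τ) ≤ θ τ - θbar := by
  intro τ hτ
  have hbound := div_one_add_mul_le_of_hasDerivWithinAt_ge_neg_sq hK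
    (fun t ht => (hderiv t ht).sub_const θbar)
    (fun t ht => sub_nonneg.2 (hmem t ht).1)
    (fun t ht => by rw [hθ0]; linarith [(hmem t ht).2]) hineq τ hτ
  rw [hθ0, sub_zero] at hbound
  have hτ0 : 0 ≤ K * τ := mul_nonneg hK hτ
  refine le_trans (div_le_div_of_nonneg_left (by linarith [hθbar.2]) ?_ ?_) hbound
  · nlinarith [hθbar.2]
  · nlinarith [hθbar.1]
end

section
/- Let h : X → [0,∞) be Lipschitz with constant c, let v : [0,∞) → X be continuously differentiable with v(0) = v₀ and v′(τ) = −h(v(τ))²·(v(τ) − p) for all τ ≥ 0, set θ(τ) = exp(−∫₀^τ h(v(σ))² dσ), assume the limit θ̄ = lim_{τ→∞} θ(τ) lies in (0,1], set v̄ = θ̄·v₀ + (1 − θ̄)·p, and assume h(v̄) = 0. Then for all τ ≥ 0, ‖v(τ) − v̄‖ ≥ (1 − θ̄)·‖v₀ − p‖ / (1 + c²·‖v₀ − p‖²·τ); in particular v(τ) converges to v̄ no faster than O(τ^{−1}). -/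
open Set Filter Topology MeasureTheory intervalIntegral

/-!
The equation is linear in `v - p` with a scalar coefficient, so `v τ - p = θ τ • (v₀ - p)` and
`v τ - v̄ = g τ • (v₀ - p)` with `g = θ - θ̄ ≥ 0`. As `h v̄ = 0`, the Lipschitz bound gives
`h (v τ)² ≤ K g(τ)²` with `K = c² ‖v₀ - p‖²`, so `g' = -h (v τ)² θ ≥ -K g²`. This Riccati
inequality keeps `g` above the solution `g 0 / (1 + g 0 K τ)` of `g' = -K g²`, and `g 0 = 1 - θ̄`.
-/

theorem eq_exp_sub_smul_of_hasDerivWithinAt {X : Type*} [NormedAddCommGroup X]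
    [NormedSpace ℝ X] {u : ℝ → X} {F r : ℝ → ℝ}
    (hF : ∀ t ∈ Ici (0:ℝ), HasDerivWithinAt F (r t) (Ici 0) t)
    (hu : ∀ t ∈ Ici (0:ℝ), HasDerivWithinAt u (-(r t) • u t) (Ici 0) t) {t : ℝ} (ht : 0 ≤ t) :
    u t = Real.exp (F 0 - F t) • u 0 := by
  set e : ℝ → X := fun s => Real.exp (F s) • u s
  have he : ∀ s ∈ Ici (0:ℝ), HasDerivWithinAt e 0 (Ici 0) s := fun s hs => by
    refine ((hF s hs).exp.smul (hu s hs)).congr_deriv ?_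
    rw [smul_smul, ← add_smul]
    simp
  have he_const : e t = e 0 :=
    constant_of_has_deriv_right_zero
      (fun x hx => (he x hx.1).continuousWithinAt.mono Icc_subset_Ici_self)
      (fun x hx => (he x hx.1).mono (Ici_subset_Ici.mpr hx.1)) t ⟨ht, le_rfl⟩
  calc u t = Real.exp (-F t) • e t := by simp [e, smul_smul, ← Real.exp_add]
    _ = Real.exp (F 0 - F t) • u 0 := by
      rw [he_const]; simp [e, smul_smul, ← Real.exp_add, neg_add_eq_sub]

theorem le_mul_one_add_of_neg_sq_le_deriv {g g' : ℝ → ℝ} {K t : ℝ} (hK : 0 ≤ K)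
    (hg0 : 0 ≤ g 0) (hg : ∀ s, HasDerivAt g (g' s) s)
    (hbound : ∀ s ∈ Ico 0 t, -(K * g s ^ 2) ≤ g' s) (ht : 0 ≤ t) :
    g 0 ≤ g t * (1 + g 0 * K * t) := by
  set a := g 0
  set G : ℝ → ℝ := fun s => ∫ σ in (0:ℝ)..s, K * g σ
  have hgc : Continuous g := continuous_iff_continuousAt.2 fun s => (hg s).continuousAt
  have hG : ∀ s, HasDerivAt G (K * g s) s := fun s =>
    ((continuous_const.mul hgc).integral_hasStrictDerivAt 0 s).hasDerivAt
  -- The integrating factor `exp G` turns the Riccati inequality `g' ≥ -K g²` into `E' ≤ 0`.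
  set E : ℝ → ℝ := fun s => (a - g s * (1 + a * K * s)) * Real.exp (G s)
  have hE : ∀ s, HasDerivAt E (Real.exp (G s) * (1 + a * K * s) * (-g' s - K * g s ^ 2)) s := by
    intro s
    have hlin : HasDerivAt (fun s : ℝ => 1 + a * K * s) (a * K) s := by
      simpa using ((hasDerivAt_id s).const_mul (a * K)).const_add 1
    refine ((((hg s).mul hlin).const_sub a).mul (hG s).exp).congr_deriv ?_
    simp only [Pi.mul_apply]
    ring
  have hE_nonpos : E t ≤ 0 := by
    refine image_le_of_deriv_right_le_deriv_boundary (B := fun _ => 0) (B' := fun _ => 0)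
      (fun s _ => (hE s).continuousAt.continuousWithinAt) (fun s _ => (hE s).hasDerivWithinAt)
      (by simp [E, G, a]) continuousOn_const (fun s _ => hasDerivWithinAt_const _ _ _)
      (fun s hs => ?_) ⟨ht, le_rfl⟩
    have h_one_add : 0 ≤ 1 + a * K * s := by have := hs.1; positivity
    have hs_bound := hbound s hs
    exact mul_nonpos_of_nonneg_of_nonpos (by positivity) (by linarith)
  have : a - g t * (1 + a * K * t) ≤ 0 :=
    nonpos_of_mul_nonpos_left hE_nonpos (Real.exp_pos _)
  linarith

theorem one_sub_le_mul_one_add_of_tendsto_exp_neg {D q : ℝ → ℝ} {K θbar τ : ℝ} (hK : 0 ≤ K)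
    (hD : ∀ t, HasDerivAt D (q t) t) (hD0 : D 0 = 0) (hq_nonneg : ∀ t, 0 ≤ q t)
    (hlim : Tendsto (fun t => Real.exp (-D t)) atTop (𝓝 θbar))
    (hq : ∀ s ∈ Ico 0 τ, q s ≤ K * (Real.exp (-D s) - θbar) ^ 2) (hτ : 0 ≤ τ) :
    1 - θbar ≤ (Real.exp (-D τ) - θbar) * (1 + K * τ) := by
  have hD_mono : Monotone D :=
    monotone_of_deriv_nonneg (fun t => (hD t).differentiableAt) fun t => (hD t).deriv ▸ hq_nonneg t
  have hθbar_le : ∀ s, θbar ≤ Real.exp (-D s) :=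
    Antitone.le_of_tendsto (fun a b hab => Real.exp_le_exp.2 (neg_le_neg (hD_mono hab))) hlim
  have hθbar_nonneg : 0 ≤ θbar := ge_of_tendsto' hlim fun t => (Real.exp_pos _).le
  set g : ℝ → ℝ := fun s => Real.exp (-D s) - θbar
  have hg0 : g 0 = 1 - θbar := by simp [g, hD0]
  have hg_deriv : ∀ s ∈ Ico 0 τ, -(K * g s ^ 2) ≤ Real.exp (-D s) * -q s := by
    intro s hs
    have hexp : Real.exp (-D s) ≤ 1 := Real.exp_le_one_iff.2 (by linarith [hD_mono hs.1])
    nlinarith [hq s hs, hq_nonneg s]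
  have hriccati := le_mul_one_add_of_neg_sq_le_deriv (g := g) hK (sub_nonneg.2 (hθbar_le 0))
    (fun s => ((hD s).neg.exp).sub_const θbar) hg_deriv hτ
  rw [hg0] at hriccati
  have : 0 ≤ g τ * (K * τ) * θbar := by have := sub_nonneg.2 (hθbar_le τ); positivity
  nlinarith

theorem sq_le_sq_mul_norm_sub_sq {X : Type*} [SeminormedAddCommGroup X] {h : X → ℝ} {c : ℝ}
    (hlip : ∀ x y : X, |h x - h y| ≤ c * ‖x - y‖) {x₀ : X} (hx₀ : h x₀ = 0) (x : X) :
    h x ^ 2 ≤ c ^ 2 * ‖x - x₀‖ ^ 2 := by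
  calc h x ^ 2 = |h x - h x₀| ^ 2 := by rw [hx₀, sub_zero, sq_abs]
    _ ≤ (c * ‖x - x₀‖) ^ 2 := pow_le_pow_left₀ (abs_nonneg _) (hlip x x₀) 2
    _ = c ^ 2 * ‖x - x₀‖ ^ 2 := mul_pow _ _ _

theorem ContinuousOn.hasDerivAt_integral_comp_max {E : Type*} [NormedAddCommGroup E]
    [NormedSpace ℝ E] [CompleteSpace E] {f : ℝ → E} {a : ℝ} (hf : ContinuousOn f (Ici a))
    (t : ℝ) : HasDerivAt (fun t => ∫ σ in a..t, f (max σ a)) (f (max t a)) t :=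
  ((hf.comp_continuous (continuous_id.max continuous_const) fun s => le_max_right s a)
    |>.integral_hasStrictDerivAt a t).hasDerivAt

theorem integral_comp_max_of_le {E : Type*} [NormedAddCommGroup E] [NormedSpace ℝ E]
    {f : ℝ → E} {a t : ℝ} (ht : a ≤ t) : ∫ σ in a..t, f (max σ a) = ∫ σ in a..t, f σ :=
  integral_congr fun σ hσ => by rw [uIcc_of_le ht] at hσ; rw [max_eq_left hσ.1]

theorem convergence_to_vbar_rate_lower_bound_general
    {X : Type*} [NormedAddCommGroup X] [NormedSpace ℝ X]
    (p v₀ : X) (c : ℝ) (h : X → ℝ)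
    (hlip : ∀ x y : X, |h x - h y| ≤ c * ‖x - y‖)
    (v : ℝ → X) (hv0 : v 0 = v₀)
    (hv' : ∀ τ ∈ Set.Ici (0:ℝ),
      HasDerivWithinAt v ((-(h (v τ) ^ 2)) • (v τ - p)) (Set.Ici 0) τ)
    (θ : ℝ → ℝ)
    (hθ : ∀ τ, θ τ = Real.exp (-(∫ σ in (0:ℝ)..τ, h (v σ) ^ 2)))
    (θbar : ℝ)
    (hlim : Filter.Tendsto θ Filter.atTop (nhds θbar))
    (vbar : X) (hvbar : vbar = θbar • v₀ + (1 - θbar) • p)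
    (hzero : h vbar = 0) :
    ∀ τ ∈ Set.Ici (0:ℝ),
      (1 - θbar) * ‖v₀ - p‖ / (1 + c ^ 2 * ‖v₀ - p‖ ^ 2 * τ) ≤ ‖v τ - vbar‖ := by
  intro τ (hτ : 0 ≤ τ)
  set q : ℝ → ℝ := fun σ => h (v σ) ^ 2
  have hh : Continuous h := (LipschitzWith.of_dist_le' fun x y => by
    simpa only [dist_eq_norm, Real.norm_eq_abs] using hlip x y).continuous
  have hq_cont : ContinuousOn q (Ici 0) := fun s hs =>
    (hh.continuousAt.comp_continuousWithinAt (hv' s hs).continuousWithinAt).pow 2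
  -- `v` is only known on `[0, ∞)`, so integrate `q` composed with the projection onto `[0, ∞)`.
  set D : ℝ → ℝ := fun t => ∫ σ in (0:ℝ)..t, q (max σ 0)
  have hD : ∀ t, HasDerivAt D (q (max t 0)) t := hq_cont.hasDerivAt_integral_comp_max
  have hD0 : D 0 = 0 := integral_same
  have hθD : ∀ s ∈ Ici (0:ℝ), θ s = Real.exp (-D s) := fun s hs => by
    rw [hθ, show D s = _ from integral_comp_max_of_le hs]
  have hdist : ∀ s ∈ Ici (0:ℝ), v s - vbar = (Real.exp (-D s) - θbar) • (v₀ - p) := by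
    intro s hs
    have hrep := eq_exp_sub_smul_of_hasDerivWithinAt (u := fun s => v s - p)
      (fun t _ => (hD t).hasDerivWithinAt)
      (fun t (ht : 0 ≤ t) => by simpa [q, max_eq_left ht] using (hv' t ht).sub_const p) hs
    simp only [hD0, zero_sub, hv0] at hrep
    rw [hvbar, show v s = p + (v s - p) by abel, hrep]
    module
  have hq : ∀ s ∈ Ico 0 τ,
      q (max s 0) ≤ c ^ 2 * ‖v₀ - p‖ ^ 2 * (Real.exp (-D s) - θbar) ^ 2 := by
    intro s hs
    have := sq_le_sq_mul_norm_sub_sq hlip hzero (v s)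
    rw [hdist s hs.1, norm_smul, Real.norm_eq_abs, mul_pow, sq_abs] at this
    simp only [q, max_eq_left hs.1]
    linarith
  have hrate := one_sub_le_mul_one_add_of_tendsto_exp_neg (by positivity) hD hD0
    (fun t => sq_nonneg _) (hlim.congr' ((eventually_ge_atTop 0).mono hθD)) hq hτ
  rw [hdist τ hτ, norm_smul, Real.norm_eq_abs, div_le_iff₀ (by positivity), mul_right_comm]
  exact mul_le_mul_of_nonneg_right (hrate.trans (by gcongr; exact le_abs_self _)) (norm_nonneg _)

/-- If `h : X → [0,∞)` is Lipschitz with constant `c`, `v` solves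
`dv/dτ = -h(v)²·(v - p)` with `v(0) = v₀`, the characteristic determining parameter
`θ(τ) = exp(-∫₀^τ h(v(σ))² dσ)` has limit `θ̄ ∈ (0,1]`, and `h(v̄) = 0` at
`v̄ = θ̄·v₀ + (1-θ̄)·p`, then `‖v(τ) - v̄‖ ≥ (1-θ̄)·‖v₀ - p‖/(1 + c²‖v₀ - p‖²τ)`
for all `τ ≥ 0`: convergence to `v̄` is no faster than `O(τ^{-1})`. -/
theorem convergence_to_vbar_rate_lower_bound
    {X : Type*} [NormedAddCommGroup X] [NormedSpace ℝ X] [CompleteSpace X]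
    (p v₀ : X) (c : ℝ) (hc : 0 ≤ c) (h : X → ℝ)
    (hpos : ∀ x, 0 ≤ h x)
    (hlip : ∀ x y : X, |h x - h y| ≤ c * ‖x - y‖)
    (v : ℝ → X) (hv0 : v 0 = v₀)
    (hv' : ∀ τ ∈ Set.Ici (0:ℝ),
      HasDerivWithinAt v ((-(h (v τ) ^ 2)) • (v τ - p)) (Set.Ici 0) τ)
    (θ : ℝ → ℝ)
    (hθ : ∀ τ, θ τ = Real.exp (-(∫ σ in (0:ℝ)..τ, h (v σ) ^ 2)))
    (θbar : ℝ) (hθbar : θbar ∈ Set.Ioc (0:ℝ) 1)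
    (hlim : Filter.Tendsto θ Filter.atTop (nhds θbar))
    (vbar : X) (hvbar : vbar = θbar • v₀ + (1 - θbar) • p)
    (hzero : h vbar = 0) :
    ∀ τ ∈ Set.Ici (0:ℝ),
      (1 - θbar) * ‖v₀ - p‖ / (1 + c ^ 2 * ‖v₀ - p‖ ^ 2 * τ) ≤ ‖v τ - vbar‖ :=
  convergence_to_vbar_rate_lower_bound_general p v₀ c h hlip v hv0 hv' θ hθ θbar hlim vbar hvbar
    hzero
end

section
/- Let h : X → [0,∞) be Lipschitz with constant c, let η̄ ∈ [0,1] satisfy h(η̄·v₀ + (1 − η̄)·p) = 0, and let η : [0,∞) → ℝ be differentiable with η(0) = 1, η̄ ≤ η(τ) ≤ 1 for all τ ≥ 0, and η′(τ) = −h(η(τ)·v₀ + (1 − η(τ))·p) for all τ ≥ 0. Then η(τ) − η̄ ≥ (1 − η̄)·exp(−c·‖v₀ − p‖·τ) for all τ ≥ 0. -/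
open Set Filter Topology

/-!
Since `h` is `c`-Lipschitz and vanishes at the point of parameter `η̄` on the segment from `p`
to `v₀`, it is at most `c‖v₀ - p‖ (η - η̄)` at the point of parameter `η ≥ η̄`. Hence
`f = η - η̄` satisfies `f' ≥ -c‖v₀ - p‖ f`, and Grönwall's inequality applied to `-f`
gives `f τ ≥ f 0 · exp (-c‖v₀ - p‖ τ)`.
-/

theorem mul_exp_neg_le_of_hasDerivWithinAt {f f' : ℝ → ℝ} {K a : ℝ}
    (hf : ∀ t ∈ Ici a, HasDerivWithinAt f (f' t) (Ici a) t)
    (bound : ∀ t ∈ Ici a, -(K * f t) ≤ f' t) :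
    ∀ t ∈ Ici a, f a * Real.exp (-(K * (t - a))) ≤ f t := by
  intro t ht
  have hcont : ContinuousOn (-f) (Icc a t) := fun s hs =>
    ((hf s hs.1).continuousWithinAt.neg).mono Icc_subset_Ici_self
  have hslope : ∀ s ∈ Ico a t, ∀ r, -f' s < r →
      ∃ᶠ z in 𝓝[>] s, (z - s)⁻¹ * ((-f) z - (-f) s) < r := fun s hs r hr =>
    (((hf s hs.1).neg.mono (Ici_subset_Ici.mpr hs.1)).liminf_right_slope_le hr).mono
      fun z hz => by rwa [slope_def_field, div_eq_inv_mul] at hz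
  have := le_gronwallBound_of_liminf_deriv_right_le (δ := -f a) (K := -K) (ε := 0) hcont hslope
    le_rfl (fun s hs => by rw [Pi.neg_apply, neg_mul_neg, add_zero]; linarith [bound s hs.1])
    t ⟨ht, le_rfl⟩
  rw [gronwallBound_ε0, Pi.neg_apply, neg_mul, neg_mul] at this
  linarith

theorem apply_smul_add_one_sub_smul_le {X : Type*} [NormedAddCommGroup X] [NormedSpace ℝ X]
    {h : X → ℝ} {c : ℝ} (hlip : ∀ x y : X, |h x - h y| ≤ c * ‖x - y‖) {v p : X} {a b : ℝ}
    (hba : b ≤ a) (hzero : h (b • v + (1 - b) • p) = 0) :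
    h (a • v + (1 - a) • p) ≤ c * ‖v - p‖ * (a - b) :=
  calc h (a • v + (1 - a) • p) = h (a • v + (1 - a) • p) - h (b • v + (1 - b) • p) := by
        rw [hzero, sub_zero]
    _ ≤ c * ‖(a • v + (1 - a) • p) - (b • v + (1 - b) • p)‖ := (le_abs_self _).trans (hlip _ _)
    _ = c * ‖v - p‖ * (a - b) := by
        rw [show (a • v + (1 - a) • p) - (b • v + (1 - b) • p) = (a - b) • (v - p) by module,
          norm_smul, Real.norm_of_nonneg (sub_nonneg.2 hba)]
        ring

theorem accelerated_exponential_rate_general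
    {X : Type*} [NormedAddCommGroup X] [NormedSpace ℝ X]
    (p v₀ : X) (c : ℝ) (h : X → ℝ)
    (hlip : ∀ x y : X, |h x - h y| ≤ c * ‖x - y‖)
    (ηbar : ℝ)
    (hzero : h (ηbar • v₀ + (1 - ηbar) • p) = 0)
    (η : ℝ → ℝ) (hη0 : η 0 = 1)
    (hmem : ∀ τ ∈ Set.Ici (0:ℝ), ηbar ≤ η τ ∧ η τ ≤ 1)
    (hderiv : ∀ τ ∈ Set.Ici (0:ℝ),
      HasDerivWithinAt η (-(h (η τ • v₀ + (1 - η τ) • p))) (Set.Ici 0) τ) :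
    ∀ τ ∈ Set.Ici (0:ℝ),
      (1 - ηbar) * Real.exp (-(c * ‖v₀ - p‖ * τ)) ≤ η τ - ηbar := by
  intro τ hτ
  have := mul_exp_neg_le_of_hasDerivWithinAt (f := fun t => η t - ηbar) (K := c * ‖v₀ - p‖)
    (fun t ht => (hderiv t ht).sub_const ηbar)
    (fun t ht => neg_le_neg (apply_smul_add_one_sub_smul_le hlip (hmem t ht).1 hzero)) τ hτ
  simpa only [hη0, sub_zero] using this

/-- For the accelerated parametric ODE `dη/dτ = -h(η·v₀ + (1-η)·p)` with
`h : X → [0,∞)` Lipschitz with constant `c` vanishing at `η̄·v₀ + (1-η̄)·p`,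
`η(0) = 1` and `η̄ ≤ η(τ) ≤ 1`: one has the exponential lower bound
`η(τ) - η̄ ≥ (1 - η̄)·exp(-c‖v₀ - p‖τ)` for all `τ ≥ 0`. -/
theorem accelerated_exponential_rate
    {X : Type*} [NormedAddCommGroup X] [NormedSpace ℝ X] [CompleteSpace X]
    (p v₀ : X) (c : ℝ) (hc : 0 ≤ c) (h : X → ℝ)
    (hpos : ∀ x, 0 ≤ h x)
    (hlip : ∀ x y : X, |h x - h y| ≤ c * ‖x - y‖)
    (ηbar : ℝ) (hηbar : ηbar ∈ Set.Icc (0:ℝ) 1)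
    (hzero : h (ηbar • v₀ + (1 - ηbar) • p) = 0)
    (η : ℝ → ℝ) (hη0 : η 0 = 1)
    (hmem : ∀ τ ∈ Set.Ici (0:ℝ), ηbar ≤ η τ ∧ η τ ≤ 1)
    (hderiv : ∀ τ ∈ Set.Ici (0:ℝ),
      HasDerivWithinAt η (-(h (η τ • v₀ + (1 - η τ) • p))) (Set.Ici 0) τ) :
    ∀ τ ∈ Set.Ici (0:ℝ),
      (1 - ηbar) * Real.exp (-(c * ‖v₀ - p‖ * τ)) ≤ η τ - ηbar :=
  accelerated_exponential_rate_general p v₀ c h hlip ηbar hzero η hη0 hmem hderiv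
end

section
/- Let E be a real Banach space, p ∈ E, let v₀ : ℝ → E be bounded, and suppose there exists a nonincreasing function θ : [0,∞) → (0,1] with θ(0) = 1 such that v₀(s + τ) = θ(τ)·v₀(s) + (1 − θ(τ))·p for all s ∈ ℝ and all τ ≥ 0. Then v₀ is constant. -/
/-!
For `s ≤ t` put `τ = t - s`. If `θ τ = 1` the relation gives `v₀ t = v₀ s` directly. Otherwise
`w = v₀ - p` satisfies `w (u + τ) = θ τ • w u` with `0 < θ τ < 1`, so iterating backwards
`‖w u‖ ≤ θ τ ^ n * sup ‖w‖` for every `n`; boundedness forces `w = 0`, i.e. `v₀ ≡ p`.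
-/

open Filter Topology

theorem eq_zero_of_map_add_eq_smul {G 𝕜 E : Type*} [AddGroup G] [NormedField 𝕜]
    [NormedAddCommGroup E] [NormedSpace 𝕜 E] (w : G → E) (C : ℝ) (hC : ∀ x, ‖w x‖ ≤ C)
    (g : G) (c : 𝕜) (hc : ‖c‖ < 1) (hw : ∀ x, w (x + g) = c • w x) : w = 0 := by
  have hpow : ∀ n : ℕ, ∀ x, ‖w x‖ ≤ ‖c‖ ^ n * C := by
    intro n
    induction n with
    | zero => simpa using hC
    | succ n ih =>
      intro x
      calc ‖w x‖ = ‖c‖ * ‖w (x - g)‖ := by rw [← norm_smul, ← hw, sub_add_cancel]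
        _ ≤ ‖c‖ * (‖c‖ ^ n * C) := by gcongr; exact ih _
        _ = ‖c‖ ^ (n + 1) * C := by ring
  have hlim : Tendsto (fun n : ℕ => ‖c‖ ^ n * C) atTop (𝓝 0) := by
    simpa using (tendsto_pow_atTop_nhds_zero_of_lt_one (norm_nonneg c) hc).mul_const C
  funext x
  exact norm_le_zero_iff.mp (ge_of_tendsto' hlim fun n => hpow n x)

theorem no_traveling_waves_general
    {E : Type*} [NormedAddCommGroup E] [NormedSpace ℝ E]
    (p : E) (v₀ : ℝ → E)
    (hbdd : ∃ M : ℝ, ∀ s : ℝ, ‖v₀ s‖ ≤ M)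
    (θ : ℝ → ℝ)
    (hmem : ∀ τ ∈ Set.Ici (0:ℝ), θ τ ∈ Set.Ioc (0:ℝ) 1)
    (hconv : ∀ s : ℝ, ∀ τ ∈ Set.Ici (0:ℝ),
      v₀ (s + τ) = θ τ • v₀ s + (1 - θ τ) • p) :
    ∀ s t : ℝ, v₀ s = v₀ t := by
  obtain ⟨M, hM⟩ := hbdd
  have hbdd_sub : ∀ s, ‖v₀ s - p‖ ≤ M + ‖p‖ :=
    fun s => (norm_sub_le _ _).trans (by linarith [hM s])
  have hle : ∀ s t, s ≤ t → v₀ s = v₀ t := by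
    intro s t hst
    have hτ : t - s ∈ Set.Ici 0 := sub_nonneg.mpr hst
    obtain ⟨hθpos, hθle⟩ := hmem _ hτ
    rcases hθle.eq_or_lt with hθ1 | hθlt
    · simpa [hθ1] using (hconv s _ hτ).symm
    · have hshift : ∀ u, v₀ (u + (t - s)) - p = θ (t - s) • (v₀ u - p) := fun u => by
        rw [hconv u _ hτ]; module
      have hzero := eq_zero_of_map_add_eq_smul (fun u => v₀ u - p) _ hbdd_sub _ _
        (by rwa [Real.norm_of_nonneg hθpos.le]) hshift
      have hs := congrFun hzero s
      have ht := congrFun hzero t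
      simp only [Pi.zero_apply, sub_eq_zero] at hs ht
      rw [hs, ht]
  intro s t
  rcases le_total s t with h | h
  exacts [hle s t h, (hle t s h).symm]

/-- No traveling waves: if a bounded function `v₀ : ℝ → E` satisfies
`v₀(s + τ) = θ(τ)·v₀(s) + (1 - θ(τ))·p` for all `s ∈ ℝ`, `τ ≥ 0`, for some
nonincreasing `θ : [0,∞) → (0,1]` with `θ(0) = 1`, then `v₀` is constant. -/
theorem no_traveling_waves
    {E : Type*} [NormedAddCommGroup E] [NormedSpace ℝ E] [CompleteSpace E]
    (p : E) (v₀ : ℝ → E)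
    (hbdd : ∃ M : ℝ, ∀ s : ℝ, ‖v₀ s‖ ≤ M)
    (θ : ℝ → ℝ) (hθ0 : θ 0 = 1)
    (hmem : ∀ τ ∈ Set.Ici (0:ℝ), θ τ ∈ Set.Ioc (0:ℝ) 1)
    (hmono : AntitoneOn θ (Set.Ici 0))
    (hconv : ∀ s : ℝ, ∀ τ ∈ Set.Ici (0:ℝ),
      v₀ (s + τ) = θ τ • v₀ s + (1 - θ τ) • p) :
    ∀ s t : ℝ, v₀ s = v₀ t :=
  no_traveling_waves_general p v₀ hbdd θ hmem hconv
end
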